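/- Let L and R be finite nonempty families of pseudo-lines such that any two distinct members of L ∪ R cross exactly once, no three distinct members of L ∪ R take a common value at a common point, and l ≺ r holds for every l ∈ L and every r ∈ R. For l ∈ L let ρ(l) ∈ R denote the member of R whose crossing with l has the smallest x-coordinate among all crossings of l with members of R. For distinct l, l' ∈ L say that l removes l' if the crossing of l' with ρ(l) has a smaller x-coordinate than the crossing of l with ρ(l). Then for every pair of distinct l, l' ∈ L: if l does not remove l', then l' removes l. -/
import Mathlib


noncomputable local instance : DecidableEq (ℝ → ℝ) := Classical.decEq _

/-- `Prec f g` (written `f ≺ g`): the pseudo-lines `f` and `g` cross exactly once,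
at a point `x₀` with `f x > g x` for all `x < x₀` and `f x < g x` for all `x > x₀`. -/
def Prec (f g : ℝ → ℝ) : Prop :=
  ∃ x₀ : ℝ, f x₀ = g x₀ ∧ (∀ x < x₀, g x < f x) ∧ (∀ x > x₀, f x < g x)

/-- Two pseudo-lines cross exactly once. -/
def CrossesOnce (f g : ℝ → ℝ) : Prop :=
  Prec f g ∨ Prec g f

lemma prec_signs {f g : ℝ → ℝ} (h : Prec f g) {a : ℝ} (ha : f a = g a) :
    (∀ x < a, g x < f x) ∧ (∀ x > a, f x < g x) := by
  obtain ⟨x₀, _, hlt, hgt⟩ := h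
  have hax : a = x₀ := by
    by_contra hne
    rcases lt_or_gt_of_ne hne with h1 | h1
    · exact absurd ha (ne_of_gt (hlt a h1))
    · exact absurd ha (ne_of_lt (hgt a h1))
  subst hax
  exact ⟨hlt, hgt⟩

lemma prec_irrefl (f : ℝ → ℝ) : ¬ Prec f f := by
  rintro ⟨x₀, _, hlt, _⟩
  exact lt_irrefl _ (hlt (x₀ - 1) (by linarith))

/-- If `l` does not remove `l'`, then `l'` removes `l` (the removal relation
is a tournament). Here `ρ(l)` is the member of `R` whose crossing with `l`
is leftmost, and `l` removes `l'` iff the crossing of `l'` with `ρ(l)` is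
strictly to the left of the crossing of `l` with `ρ(l)`. -/
theorem removal_is_tournament
    (L R : Finset (ℝ → ℝ)) (hL : L.Nonempty) (hR : R.Nonempty)
    (hcont : ∀ f ∈ L ∪ R, Continuous f)
    (hcross : ∀ f ∈ L ∪ R, ∀ g ∈ L ∪ R, f ≠ g → CrossesOnce f g)
    (hnothree : ∀ f ∈ L ∪ R, ∀ g ∈ L ∪ R, ∀ h ∈ L ∪ R, f ≠ g → f ≠ h → g ≠ h →
      ∀ x : ℝ, ¬(f x = g x ∧ g x = h x))
    (hprec : ∀ l ∈ L, ∀ r ∈ R, Prec l r)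
    (l l' : ℝ → ℝ) (hl : l ∈ L) (hl' : l' ∈ L) (hne : l ≠ l')
    -- `rl = ρ(l)` crosses `l` at `xl`, leftmost among crossings of `l` with `R`:
    (rl : ℝ → ℝ) (hrl : rl ∈ R) (xl : ℝ) (hxl : l xl = rl xl)
    (hminl : ∀ r ∈ R, ∀ x : ℝ, l x = r x → xl ≤ x)
    -- `rl' = ρ(l')` crosses `l'` at `xl'`, leftmost among crossings of `l'` with `R`:
    (rl' : ℝ → ℝ) (hrl' : rl' ∈ R) (xl' : ℝ) (hxl' : l' xl' = rl' xl')
    (hminl' : ∀ r ∈ R, ∀ x : ℝ, l' x = r x → xl' ≤ x)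
    -- `z` is the crossing of `l'` with `ρ(l)`:
    (z : ℝ) (hz : l' z = rl z)
    -- `z'` is the crossing of `l` with `ρ(l')`:
    (z' : ℝ) (hz' : l z' = rl' z')
    -- `l` does not remove `l'`:
    (hnotrem : ¬ z < xl) :
    -- then `l'` removes `l`:
    z' < xl' := by
  -- memberships in the union
  have hlU : l ∈ L ∪ R := Finset.mem_union_left _ hl
  have hl'U : l' ∈ L ∪ R := Finset.mem_union_left _ hl'
  have hrlU : rl ∈ L ∪ R := Finset.mem_union_right _ hrl
  have hrl'U : rl' ∈ L ∪ R := Finset.mem_union_right _ hrl'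
  -- the four Prec facts
  have Plrl : Prec l rl := hprec l hl rl hrl
  have Pl'rl : Prec l' rl := hprec l' hl' rl hrl
  have Plrl' : Prec l rl' := hprec l hl rl' hrl'
  have Pl'rl' : Prec l' rl' := hprec l' hl' rl' hrl'
  -- non-equalities
  have hl_rl : l ≠ rl := fun h => prec_irrefl rl (h ▸ Plrl)
  have hl'_rl : l' ≠ rl := fun h => prec_irrefl rl (h ▸ Pl'rl)
  have hl_rl' : l ≠ rl' := fun h => prec_irrefl rl' (h ▸ Plrl')
  have hl'_rl' : l' ≠ rl' := fun h => prec_irrefl rl' (h ▸ Pl'rl')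
  -- sign conditions
  have Slrl := prec_signs Plrl hxl
  have Sl'rl := prec_signs Pl'rl hz
  have Plrl'S := prec_signs Plrl' hz'
  have Sl'rl' := prec_signs Pl'rl' hxl'
  have hxlz : xl ≤ z := le_of_not_gt hnotrem
  by_cases hrr : rl = rl'
  · -- rl = rl': then z' = xl and z = xl'
    subst hrr
    have hz'xl : z' = xl := by
      by_contra hzz
      rcases lt_or_gt_of_ne hzz with h1 | h1
      · exact absurd hz' (ne_of_gt (Slrl.1 z' h1))
      · exact absurd hz' (ne_of_lt (Slrl.2 z' h1))
    have hzxl' : z = xl' := by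
      by_contra hzz
      rcases lt_or_gt_of_ne hzz with h1 | h1
      · exact absurd hz (ne_of_gt (Sl'rl'.1 z h1))
      · exact absurd hz (ne_of_lt (Sl'rl'.2 z h1))
    rw [hz'xl]
    have hle : xl ≤ xl' := hzxl' ▸ hxlz
    rcases lt_or_eq_of_le hle with h | h
    · exact h
    · exfalso
      have hz2 : l' xl' = rl xl' := hzxl' ▸ hz
      rw [← h] at hz2
      exact hnothree l hlU l' hl'U rl hrlU hne hl_rl hl'_rl xl
        ⟨by rw [hxl, hz2], hz2⟩
  · -- rl ≠ rl'
    have hxl'z : xl' ≤ z := hminl' rl hrl z hz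
    have hxlz' : xl ≤ z' := hminl rl' hrl' z' hz'
    -- strict: xl < z
    have hxlzs : xl < z := lt_of_le_of_ne hxlz (fun h => by
      subst h
      exact hnothree l hlU l' hl'U rl hrlU hne hl_rl hl'_rl xl ⟨by rw [hxl, hz], hz⟩)
    -- strict: xl' < z
    have hxl'zs : xl' < z := lt_of_le_of_ne hxl'z (fun h => by
      subst h
      exact hnothree l' hl'U rl hrlU rl' hrl'U hl'_rl hl'_rl' hrr xl'
        ⟨hz, by rw [← hz, hxl']⟩)
    -- strict: xl < z'
    have hxlz's : xl < z' := lt_of_le_of_ne hxlz' (fun h => by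
      subst h
      exact hnothree l hlU rl hrlU rl' hrl'U hl_rl hl_rl' hrr xl ⟨hxl, by rw [← hxl, hz']⟩)
    by_contra hcon
    have hxl'z' : xl' ≤ z' := le_of_not_gt hcon
    have hxl'z's : xl' < z' := lt_of_le_of_ne hxl'z' (fun h => by
      subst h
      exact hnothree l hlU l' hl'U rl' hrl'U hne hl_rl' hl'_rl' xl'
        ⟨by rw [hz', hxl'], hxl'⟩)
    -- l' above l at xl, l above l' at xl'
    have h1 : l xl < l' xl := by
      have := Sl'rl.1 xl hxlzs
      rwa [← hxl] at this
    have h2 : l' xl' < l xl' := by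
      have := Plrl'S.1 xl' hxl'z's
      rwa [← hxl'] at this
    rcases hcross l hlU l' hl'U hne with ⟨y, hy0, hylt, hygt⟩ | ⟨y, hy0, hylt, hygt⟩
    · -- Prec l l': l' < l before y, l < l' after y, so xl' < y < xl
      have hyxl : y < xl := by
        rcases lt_trichotomy xl y with h | h | h
        · exact absurd h1 (not_lt.mpr (le_of_lt (hylt xl h)))
        · exact absurd h1 (by rw [h, hy0]; exact lt_irrefl _)
        · exact h
      have hxl'y : xl' < y := by
        rcases lt_trichotomy y xl' with h | h | h
        · exact absurd h2 (not_lt.mpr (le_of_lt (hygt xl' h)))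
        · exact absurd h2 (by rw [← h, hy0]; exact lt_irrefl _)
        · exact h
      -- at y: l y = l' y, but y < z' so rl' y < l y, and y > xl' so l' y < rl' y
      have ha : rl' y < l y := Plrl'S.1 y (lt_of_lt_of_le hyxl hxlz')
      have hb : l' y < rl' y := Sl'rl'.2 y hxl'y
      rw [hy0] at ha
      exact lt_irrefl _ (ha.trans hb)
    · -- Prec l' l: l < l' before y, l' < l after y, so xl < y < xl'
      have hxly : xl < y := by
        rcases lt_trichotomy y xl with h | h | h
        · exact absurd h1 (not_lt.mpr (le_of_lt (hygt xl h)))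
        · exact absurd h1 (by rw [← h, hy0]; exact lt_irrefl _)
        · exact h
      have hyxl' : y < xl' := by
        rcases lt_trichotomy xl' y with h | h | h
        · exact absurd h2 (not_lt.mpr (le_of_lt (hylt xl' h)))
        · exact absurd h2 (by rw [h, hy0]; exact lt_irrefl _)
        · exact h
      -- at y: l y = l' y, y > xl so l y < rl y, y < z so rl y < l' y
      have ha : l y < rl y := Slrl.2 y hxly
      have hb : rl y < l' y := Sl'rl.1 y (lt_of_lt_of_le hyxl' hxl'z)
      rw [hy0] at hb
      exact lt_irrefl _ (ha.trans hb)
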